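/- Define p(x,t) = 2 ∫₀^∞ (2πs)^{-1/2} exp(−x²/(2s)) · ( s/(π(s² + t²)) ) ds. Then for all x ≠ 0 and t > 0, p satisfies the fourth-order equation ∂²p/∂t² = −(1/4) ∂⁴p/∂x⁴. -/

import Mathlib

open Real Set

/-- Density of `I_{BC}(t) = B(|C(t)|)`, a Brownian motion at a Cauchy time:
`p(x,t) = 2 ∫₀^∞ (2πs)^{-1/2} e^{−x²/(2s)} (s/(π(s²+t²))) ds`. -/
noncomputable def densBC (x t : ℝ) : ℝ :=
  2 * ∫ s in Set.Ioi (0 : ℝ),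
      (Real.sqrt (2 * Real.pi * s))⁻¹ * Real.exp (-x ^ 2 / (2 * s)) *
        (s / (Real.pi * (s ^ 2 + t ^ 2)))

open MeasureTheory Filter Metric Topology

namespace DensBCAux

noncomputable def phi (x s : ℝ) : ℝ :=
  (Real.sqrt (2 * Real.pi * s))⁻¹ * Real.exp (-x ^ 2 / (2 * s))

noncomputable def g (t s : ℝ) : ℝ := s / (Real.pi * (s ^ 2 + t ^ 2))

noncomputable def gT (t s : ℝ) : ℝ := -2 * t * s / (Real.pi * (s ^ 2 + t ^ 2) ^ 2)

noncomputable def gTT (t s : ℝ) : ℝ :=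
  2 * s * (3 * t ^ 2 - s ^ 2) / (Real.pi * (s ^ 2 + t ^ 2) ^ 3)

noncomputable def P : ℕ → ℝ → ℝ → ℝ
  | 0, _, _ => 1
  | 1, y, s => -y / s
  | 2, y, s => y ^ 2 / s ^ 2 - 1 / s
  | 3, y, s => -y ^ 3 / s ^ 3 + 3 * y / s ^ 2
  | _, y, s => y ^ 4 / s ^ 4 - 6 * y ^ 2 / s ^ 3 + 3 / s ^ 2

noncomputable def bnd (b s : ℝ) : ℝ :=
  (1 + s⁻¹) ^ 4 * (Real.sqrt s * Real.exp (-b / s) / s ^ 2)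

lemma meas_exp_aux (b : ℝ) : Measurable fun s : ℝ => Real.exp (-b / s) :=
  Real.measurable_exp.comp (measurable_const.div measurable_id)

lemma bnd_meas (b : ℝ) : Measurable (bnd b) := by
  unfold bnd
  exact ((measurable_const.add measurable_inv).pow_const 4).mul
    (((Real.continuous_sqrt.measurable).mul (meas_exp_aux b)).div (measurable_id.pow_const 2))

lemma bnd_nonneg {b s : ℝ} (hs : 0 < s) : 0 ≤ bnd b s := by
  unfold bnd; positivity

lemma integrable_bnd {b : ℝ} (hb : 0 < b) : IntegrableOn (bnd b) (Ioi (0:ℝ)) := by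
  rw [← Ioc_union_Ioi_eq_Ioi (zero_le_one (α := ℝ))]
  apply IntegrableOn.union
  · -- bounded on (0,1]
    apply Measure.integrableOn_of_bounded (M := 16 * 720 / b ^ 6)
      (measure_Ioc_lt_top).ne ((bnd_meas b).aestronglyMeasurable)
    rw [ae_restrict_iff' measurableSet_Ioc]
    refine ae_of_all _ fun s hs => ?_
    obtain ⟨hs0, hs1⟩ := hs
    have hsi : (0:ℝ) < s⁻¹ := inv_pos.2 hs0
    have h1 : (1 + s⁻¹) ≤ 2 * s⁻¹ := by
      have : (1:ℝ) ≤ s⁻¹ := (one_le_inv_iff₀).2 ⟨hs0, hs1⟩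
      linarith
    have hbs : 0 ≤ b / s := div_nonneg hb.le hs0.le
    have hexp : Real.exp (-b / s) ≤ 720 * s ^ 6 / b ^ 6 := by
      have h6 : ((b / s) ^ 6 / 720 : ℝ) ≤ Real.exp (b / s) := by
        have := Real.pow_div_factorial_le_exp (b / s) hbs 6
        norm_num [Nat.factorial] at this
        linarith
      have hpos : (0:ℝ) < (b / s) ^ 6 / 720 := by positivity
      calc Real.exp (-b / s) = (Real.exp (b / s))⁻¹ := by
            rw [← Real.exp_neg]; ring_nf
        _ ≤ ((b / s) ^ 6 / 720)⁻¹ := by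
            apply inv_anti₀ hpos h6
        _ = 720 * s ^ 6 / b ^ 6 := by
            field_simp
    have hsq : Real.sqrt s ≤ 1 := Real.sqrt_le_one.2 hs1
    have key : bnd b s ≤ (2 * s⁻¹) ^ 4 * (1 * (720 * s ^ 6 / b ^ 6) / s ^ 2) := by
      unfold bnd
      gcongr <;> first
        | positivity
        | exact Real.sqrt_nonneg s
        | exact (Real.exp_pos _).le
        | skip
    rw [Real.norm_eq_abs, abs_of_nonneg (bnd_nonneg hs0)]
    refine key.trans (le_of_eq ?_)
    field_simp
    ring
  · -- integrable tail
    refine Integrable.mono' (g := fun s => 16 * s ^ (-(3:ℝ)/2))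
      ((integrableOn_Ioi_rpow_of_lt (by norm_num) one_pos).const_mul 16)
      ((bnd_meas b).aestronglyMeasurable.restrict) ?_
    rw [ae_restrict_iff' measurableSet_Ioi]
    refine ae_of_all _ fun s hs => ?_
    have hs1 : (1:ℝ) < s := hs
    have hs0 : (0:ℝ) < s := lt_trans one_pos hs1
    have hi1 : s⁻¹ ≤ 1 := by
      rw [inv_le_one_iff₀]; right; exact hs1.le
    have hexp : Real.exp (-b / s) ≤ 1 := by
      rw [← Real.exp_zero]
      apply Real.exp_le_exp.2
      rw [neg_div]
      simp [div_nonneg hb.le hs0.le]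
    have key : bnd b s ≤ 2 ^ 4 * (Real.sqrt s * 1 / s ^ 2) := by
      unfold bnd
      gcongr <;> first
        | positivity
        | linarith
        | exact Real.sqrt_nonneg s
        | skip
    rw [Real.norm_eq_abs, abs_of_nonneg (bnd_nonneg hs0)]
    refine key.trans (le_of_eq ?_)
    rw [mul_one, Real.sqrt_eq_rpow]
    rw [show (s:ℝ) ^ 2 = s ^ (2:ℝ) by rw [← Real.rpow_natCast s 2]; norm_num]
    rw [← Real.rpow_sub hs0]
    norm_num

lemma inv_sqrt {s : ℝ} (hs : 0 < s) : (Real.sqrt s)⁻¹ = Real.sqrt s / s := by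
  rw [eq_div_iff hs.ne']
  nth_rewrite 2 [← Real.mul_self_sqrt hs.le]
  rw [inv_mul_cancel_left₀ (Real.sqrt_ne_zero'.2 hs)]

lemma phi_nonneg (y : ℝ) {s : ℝ} (hs : 0 < s) : 0 ≤ phi y s := by
  unfold phi; positivity

lemma phi_le {y s b : ℝ} (hs : 0 < s) (hby : b ≤ y ^ 2 / 2) :
    phi y s ≤ Real.sqrt s * Real.exp (-b / s) / s := by
  unfold phi
  have h1 : (Real.sqrt (2 * Real.pi * s))⁻¹ ≤ (Real.sqrt s)⁻¹ :=
    inv_anti₀ (Real.sqrt_pos.2 hs)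
      (Real.sqrt_le_sqrt (by nlinarith [Real.pi_gt_three]))
  have h2 : Real.exp (-y ^ 2 / (2 * s)) ≤ Real.exp (-b / s) := by
    apply Real.exp_le_exp.2
    rw [div_le_div_iff₀ (by positivity) (by positivity)]
    nlinarith
  calc (Real.sqrt (2 * Real.pi * s))⁻¹ * Real.exp (-y ^ 2 / (2 * s))
      ≤ (Real.sqrt s)⁻¹ * Real.exp (-b / s) := by
        apply mul_le_mul h1 h2 (Real.exp_pos _).le (by positivity)
    _ = Real.sqrt s * Real.exp (-b / s) / s := by
        rw [inv_sqrt hs, div_mul_eq_mul_div]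

lemma g_nonneg (t : ℝ) {s : ℝ} (hs : 0 ≤ s) : 0 ≤ g t s := by
  unfold g; positivity

lemma g_le (t : ℝ) {s : ℝ} (hs : 0 < s) : g t s ≤ s⁻¹ := by
  unfold g
  have h1 : s / (Real.pi * (s ^ 2 + t ^ 2)) ≤ s / (s ^ 2) :=
    div_le_div_of_nonneg_left hs.le (by positivity) (by nlinarith [Real.pi_gt_three])
  refine h1.trans (le_of_eq ?_)
  field_simp

set_option maxHeartbeats 1000000 in
lemma P_le {k : ℕ} (hk : k ≤ 4) {M s y : ℝ} (hM : 1 ≤ M) (hy : |y| ≤ M) (hs : 0 < s) :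
    |P k y s| ≤ 6 * M ^ 4 * (1 + s⁻¹) ^ 4 := by
  have hu : (0:ℝ) < s⁻¹ := inv_pos.2 hs
  set u := s⁻¹ with hudef
  have hy' : -M ≤ y ∧ y ≤ M := abs_le.1 hy
  have hy2 : y ^ 2 ≤ M ^ 2 := by nlinarith [abs_nonneg y, sq_abs y]
  have h2 : (1:ℝ) ≤ M ^ 2 := one_le_pow₀ hM
  have hM2 : M ^ 2 ≤ M ^ 4 := by nlinarith [mul_nonneg (sq_nonneg M) (sub_nonneg.2 h2)]
  have hMM : M ≤ M ^ 4 := by nlinarith [mul_nonneg (sub_nonneg.2 hM) (sub_nonneg.2 h2)]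
  have h0 : (1:ℝ) ≤ M ^ 4 := one_le_pow₀ hM
  have hE : 6 * M ^ 4 * (1 + u) ^ 4 =
      6 * M ^ 4 + 24 * (M ^ 4 * u) + 36 * (M ^ 4 * u ^ 2) + 24 * (M ^ 4 * u ^ 3)
        + 6 * (M ^ 4 * u ^ 4) := by ring
  have hA : 0 ≤ M ^ 4 * u := by positivity
  have hB : 0 ≤ M ^ 4 * u ^ 2 := by positivity
  have hC : 0 ≤ M ^ 4 * u ^ 3 := by positivity
  have hD : 0 ≤ M ^ 4 * u ^ 4 := by positivity
  have hy2u2 : y ^ 2 * u ^ 2 ≤ M ^ 4 * u ^ 2 :=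
    mul_le_mul_of_nonneg_right (hy2.trans hM2) (by positivity)
  have hy2u3 : y ^ 2 * u ^ 3 ≤ M ^ 4 * u ^ 3 :=
    mul_le_mul_of_nonneg_right (hy2.trans hM2) (by positivity)
  have hy4 : y ^ 4 ≤ M ^ 4 := by
    nlinarith [mul_le_mul hy2 hy2 (sq_nonneg y) (by positivity : (0:ℝ) ≤ M ^ 2)]
  have hy4u4 : y ^ 4 * u ^ 4 ≤ M ^ 4 * u ^ 4 :=
    mul_le_mul_of_nonneg_right hy4 (by positivity)
  have hyu : y * u ≤ M ^ 4 * u ∧ -(M ^ 4 * u) ≤ y * u := by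
    constructor <;> nlinarith [mul_le_mul_of_nonneg_right hy'.2 hu.le,
      mul_le_mul_of_nonneg_right hy'.1 hu.le]
  have hyu2 : y * u ^ 2 ≤ M ^ 4 * u ^ 2 ∧ -(M ^ 4 * u ^ 2) ≤ y * u ^ 2 := by
    constructor <;> nlinarith [mul_le_mul_of_nonneg_right hy'.2 (by positivity : (0:ℝ) ≤ u ^ 2),
      mul_le_mul_of_nonneg_right hy'.1 (by positivity : (0:ℝ) ≤ u ^ 2)]
  have hy3 : -(M ^ 3) ≤ y ^ 3 ∧ y ^ 3 ≤ M ^ 3 := by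
    have := abs_le.1 ((abs_pow y 3) ▸ pow_le_pow_left₀ (abs_nonneg y) hy 3)
    exact this
  have hM3 : M ^ 3 ≤ M ^ 4 := by nlinarith [mul_nonneg (mul_nonneg (le_trans zero_le_one hM) (le_trans zero_le_one hM)) (mul_nonneg (le_trans zero_le_one hM) (sub_nonneg.2 hM))]
  have hy3u3 : y ^ 3 * u ^ 3 ≤ M ^ 4 * u ^ 3 ∧ -(M ^ 4 * u ^ 3) ≤ y ^ 3 * u ^ 3 := by
    constructor <;> nlinarith [mul_le_mul_of_nonneg_right hy3.2 (by positivity : (0:ℝ) ≤ u ^ 3),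
      mul_le_mul_of_nonneg_right hy3.1 (by positivity : (0:ℝ) ≤ u ^ 3),
      mul_le_mul_of_nonneg_right hM3 (by positivity : (0:ℝ) ≤ u ^ 3)]
  have hy2u2nn : 0 ≤ y ^ 2 * u ^ 2 := by positivity
  have hy4u4nn : 0 ≤ y ^ 4 * u ^ 4 := by positivity
  have hu2 : 0 ≤ u ^ 2 := by positivity
  interval_cases k
  · simp only [P, abs_one]
    linarith
  · have e : P 1 y s = -(y * u) := by
      simp only [P, hudef]; field_simp
    rw [e, abs_le]
    constructor <;> linarith [hyu.1, hyu.2]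
  · have e : P 2 y s = y ^ 2 * u ^ 2 - u := by
      simp only [P, hudef]; field_simp
    have huM : u ≤ M ^ 4 * u := by nlinarith
    rw [e, abs_le]
    constructor <;> linarith
  · have e : P 3 y s = -(y ^ 3 * u ^ 3) + 3 * (y * u ^ 2) := by
      simp only [P, hudef]; field_simp; try ring
    rw [e, abs_le]
    constructor <;> linarith [hy3u3.1, hy3u3.2, hyu2.1, hyu2.2]
  · have e : P 4 y s = y ^ 4 * u ^ 4 - 6 * (y ^ 2 * u ^ 3) + 3 * u ^ 2 := by
      simp only [P, hudef]; field_simp; try ring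
    have hy2u3nn : 0 ≤ y ^ 2 * u ^ 3 := by positivity
    have huu : u ^ 2 ≤ M ^ 4 * u ^ 2 := by nlinarith
    rw [e, abs_le]
    constructor <;> linarith

lemma meas_phi (y : ℝ) : Measurable fun s => phi y s := by
  unfold phi
  exact ((Real.continuous_sqrt.measurable.comp (measurable_id.const_mul (2 * Real.pi))).inv).mul
    (Real.measurable_exp.comp (measurable_const.div (measurable_id.const_mul 2)))

lemma meas_g (t : ℝ) : Measurable fun s => g t s := by
  unfold g
  exact measurable_id.div (((measurable_id.pow_const 2).add_const (t ^ 2)).const_mul Real.pi)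

lemma meas_gT (t : ℝ) : Measurable fun s => gT t s := by
  unfold gT
  exact (measurable_id.const_mul (-2 * t)).div
    ((((measurable_id.pow_const 2).add_const (t ^ 2)).pow_const 2).const_mul Real.pi)

lemma meas_gTT (t : ℝ) : Measurable fun s => gTT t s := by
  unfold gTT
  exact ((measurable_id.const_mul 2).mul
      ((measurable_const.sub (measurable_id.pow_const 2)))).div
    ((((measurable_id.pow_const 2).add_const (t ^ 2)).pow_const 3).const_mul Real.pi)

lemma meas_P (k : ℕ) (y : ℝ) : Measurable fun s => P k y s := by
  rcases k with _ | _ | _ | _ | k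
  · exact measurable_const
  · exact measurable_const.div measurable_id
  · exact (measurable_const.div (measurable_id.pow_const 2)).sub
      (measurable_const.div measurable_id)
  · exact (measurable_const.div (measurable_id.pow_const 3)).add
      (measurable_const.div (measurable_id.pow_const 2))
  · exact ((measurable_const.div (measurable_id.pow_const 4)).sub
      (measurable_const.div (measurable_id.pow_const 3))).add
      (measurable_const.div (measurable_id.pow_const 2))

lemma meas_PphiG (k : ℕ) (y t : ℝ) : Measurable fun s => P k y s * phi y s * g t s :=
  ((meas_P k y).mul (meas_phi y)).mul (meas_g t)

lemma bnd_one_le {b s : ℝ} (hs : 0 < s) :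
    Real.sqrt s * Real.exp (-b / s) / s ^ 2 ≤ bnd b s := by
  unfold bnd
  have h1 : (1:ℝ) ≤ (1 + s⁻¹) ^ 4 := one_le_pow₀ (by linarith [inv_pos.2 hs])
  exact le_mul_of_one_le_left (by positivity) h1

lemma bound_x {k : ℕ} (hk : k ≤ 4) {M b y t s : ℝ} (hM : 1 ≤ M) (hy : |y| ≤ M)
    (hs : 0 < s) (hby : b ≤ y ^ 2 / 2) :
    ‖P k y s * phi y s * g t s‖ ≤ 6 * M ^ 4 * bnd b s := by
  rw [Real.norm_eq_abs, abs_mul, abs_mul]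
  have h1 := P_le hk hM hy hs
  have h2 : |phi y s| ≤ Real.sqrt s * Real.exp (-b / s) / s := by
    rw [abs_of_nonneg (phi_nonneg _ hs)]; exact phi_le hs hby
  have h3 : |g t s| ≤ s⁻¹ := by
    rw [abs_of_nonneg (g_nonneg _ hs.le)]; exact g_le t hs
  calc |P k y s| * |phi y s| * |g t s|
      ≤ (6 * M ^ 4 * (1 + s⁻¹) ^ 4) * (Real.sqrt s * Real.exp (-b / s) / s) * s⁻¹ := by
        apply mul_le_mul (mul_le_mul h1 h2 (abs_nonneg _) (by positivity)) h3
          (abs_nonneg _) (by positivity)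
    _ = 6 * M ^ 4 * bnd b s := by
        unfold bnd; field_simp

lemma bound_gT {x t b τ s : ℝ} (hs : 0 < s) (ht : 0 < t) (hτ : t / 2 ≤ τ)
    (hb : b ≤ x ^ 2 / 2) :
    ‖phi x s * gT τ s‖ ≤ 4 / t * bnd b s := by
  have hτ0 : 0 < τ := lt_of_lt_of_le (half_pos ht) hτ
  rw [Real.norm_eq_abs, abs_mul]
  have h2 : |phi x s| ≤ Real.sqrt s * Real.exp (-b / s) / s := by
    rw [abs_of_nonneg (phi_nonneg _ hs)]; exact phi_le hs hb
  have h3 : |gT τ s| ≤ 4 / (t * s) := by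
    have e : gT τ s = -(2 * τ * s / (Real.pi * (s ^ 2 + τ ^ 2) ^ 2)) := by
      unfold gT; ring
    rw [e, abs_neg, abs_of_nonneg (by positivity)]
    rw [div_le_div_iff₀ (by positivity) (by positivity)]
    nlinarith [sq_nonneg (s ^ 2 - τ ^ 2), Real.pi_gt_three, sq_nonneg (s * τ),
      mul_nonneg (mul_nonneg (sub_nonneg.2 (by linarith : t ≤ 2 * τ)) (sq_nonneg s)) hτ0.le,
      mul_pos (mul_pos hs hs) (mul_pos hτ0 hτ0)]
  calc |phi x s| * |gT τ s|
      ≤ (Real.sqrt s * Real.exp (-b / s) / s) * (4 / (t * s)) := by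
        apply mul_le_mul h2 h3 (abs_nonneg _) (by positivity)
    _ = 4 / t * (Real.sqrt s * Real.exp (-b / s) / s ^ 2) := by
        field_simp
    _ ≤ 4 / t * bnd b s := by
        apply mul_le_mul_of_nonneg_left (bnd_one_le hs) (by positivity)

lemma bound_gTT {x t b τ s : ℝ} (hs : 0 < s) (ht : 0 < t) (hτ : t / 2 ≤ τ)
    (hb : b ≤ x ^ 2 / 2) :
    ‖phi x s * gTT τ s‖ ≤ 24 / t ^ 2 * bnd b s := by
  have hτ0 : 0 < τ := lt_of_lt_of_le (half_pos ht) hτ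
  rw [Real.norm_eq_abs, abs_mul]
  have h2 : |phi x s| ≤ Real.sqrt s * Real.exp (-b / s) / s := by
    rw [abs_of_nonneg (phi_nonneg _ hs)]; exact phi_le hs hb
  have h3 : |gTT τ s| ≤ 24 / (t ^ 2 * s) := by
    have e : |gTT τ s| = 2 * s * |3 * τ ^ 2 - s ^ 2| / (Real.pi * (s ^ 2 + τ ^ 2) ^ 3) := by
      unfold gTT
      rw [abs_div, abs_mul, abs_of_nonneg (by positivity : (0:ℝ) ≤ 2 * s),
        abs_of_nonneg (by positivity : (0:ℝ) ≤ Real.pi * (s ^ 2 + τ ^ 2) ^ 3)]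
    rw [e, div_le_div_iff₀ (by positivity) (by positivity)]
    have habs : |3 * τ ^ 2 - s ^ 2| ≤ 3 * (s ^ 2 + τ ^ 2) := by
      rw [abs_le]; constructor <;> nlinarith [sq_nonneg s, sq_nonneg τ]
    have hmul : 2 * s * |3 * τ ^ 2 - s ^ 2| * (t ^ 2 * s) ≤
        2 * s * (3 * (s ^ 2 + τ ^ 2)) * (t ^ 2 * s) := by
      apply mul_le_mul_of_nonneg_right (mul_le_mul_of_nonneg_left habs (by positivity))
        (by positivity)
    refine hmul.trans ?_
    have ht2 : t ^ 2 ≤ 4 * τ ^ 2 := by nlinarith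
    nlinarith [sq_nonneg (s ^ 2 - τ ^ 2), Real.pi_gt_three,
      mul_pos (mul_pos hs hs) (mul_pos hτ0 hτ0),
      mul_nonneg (mul_nonneg (sq_nonneg s) (sq_nonneg τ)) (sq_nonneg s),
      mul_nonneg (mul_nonneg (sq_nonneg s) (sq_nonneg τ)) (sq_nonneg τ),
      mul_nonneg (sq_nonneg (s ^ 2 - τ ^ 2)) (add_pos (pow_pos hs 2) (pow_pos hτ0 2)).le,
      mul_nonneg (mul_nonneg (sub_nonneg.2 ht2) (sq_nonneg s)) (add_pos (pow_pos hs 2) (pow_pos hτ0 2)).le]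
  calc |phi x s| * |gTT τ s|
      ≤ (Real.sqrt s * Real.exp (-b / s) / s) * (24 / (t ^ 2 * s)) := by
        apply mul_le_mul h2 h3 (abs_nonneg _) (by positivity)
    _ = 24 / t ^ 2 * (Real.sqrt s * Real.exp (-b / s) / s ^ 2) := by
        field_simp
    _ ≤ 24 / t ^ 2 * bnd b s := by
        apply mul_le_mul_of_nonneg_left (bnd_one_le hs) (by positivity)

lemma hasDerivAt_g_t {s : ℝ} (hs : 0 < s) (τ : ℝ) :
    HasDerivAt (fun τ => g τ s) (gT τ s) τ := by
  have hd : HasDerivAt (fun τ : ℝ => Real.pi * (s ^ 2 + τ ^ 2)) (Real.pi * (2 * τ)) τ := by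
    simpa using ((hasDerivAt_pow 2 τ).const_add (s ^ 2)).const_mul Real.pi
  have h := (hasDerivAt_const τ s).div hd (by positivity)
  simp only [g, gT]
  refine h.congr_deriv ?_
  field_simp
  ring

lemma hasDerivAt_gT_t {s : ℝ} (hs : 0 < s) {τ t : ℝ} (ht : 0 < t) :
    HasDerivAt (fun τ => gT τ s) (gTT τ s) τ := by
  have hnum : HasDerivAt (fun τ : ℝ => -2 * τ * s) (-2 * s) τ := by
    simpa using ((hasDerivAt_id τ).const_mul (-2 : ℝ)).mul_const s
  have hden : HasDerivAt (fun τ : ℝ => Real.pi * (s ^ 2 + τ ^ 2) ^ 2)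
      (Real.pi * (2 * (s ^ 2 + τ ^ 2) * (2 * τ))) τ := by
    have hb : HasDerivAt (fun τ : ℝ => s ^ 2 + τ ^ 2) (2 * τ) τ := by
      simpa using (hasDerivAt_pow 2 τ).const_add (s ^ 2)
    simpa [mul_comm, mul_assoc, mul_left_comm] using (hb.pow 2).const_mul Real.pi
  have h := hnum.div hden (by positivity)
  simp only [gT, gTT]
  refine h.congr_deriv ?_
  field_simp
  ring

lemma hasDerivAt_exp_x {s : ℝ} (hs : 0 < s) (y : ℝ) :
    HasDerivAt (fun y => Real.exp (-y ^ 2 / (2 * s)))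
      (-(y / s) * Real.exp (-y ^ 2 / (2 * s))) y := by
  have h1 : HasDerivAt (fun y : ℝ => -y ^ 2 / (2 * s)) (-(2 * y) / (2 * s)) y := by
    simpa using ((hasDerivAt_pow 2 y).neg.div_const (2 * s))
  convert h1.exp using 1
  field_simp

lemma hasDerivAt_phi_x {s : ℝ} (hs : 0 < s) (y : ℝ) :
    HasDerivAt (fun y => phi y s) (-(y / s) * phi y s) y := by
  simp only [phi]
  refine ((hasDerivAt_exp_x hs y).const_mul ((Real.sqrt (2 * Real.pi * s))⁻¹)).congr_deriv ?_
  ring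

lemma hasDerivAt_P_phi (k : ℕ) (hk : k ≤ 3) {s : ℝ} (hs : 0 < s) (y : ℝ) :
    HasDerivAt (fun y => P k y s * phi y s) (P (k + 1) y s * phi y s) y := by
  have hphi := hasDerivAt_phi_x hs y
  have hs' : (s:ℝ) ≠ 0 := hs.ne'
  interval_cases k
  · simp only [P, one_mul]
    convert hphi using 1
    ring
  · have h : HasDerivAt (fun y : ℝ => -y / s) (-1 / s) y := by
      simpa using (hasDerivAt_id y).neg.div_const s
    have := h.mul hphi
    simp only [P]
    refine this.congr_deriv ?_
    field_simp
    ring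
  · have h : HasDerivAt (fun y : ℝ => y ^ 2 / s ^ 2 - 1 / s) (2 * y / s ^ 2) y := by
      simpa using ((hasDerivAt_pow 2 y).div_const (s ^ 2)).sub_const (1 / s)
    have := h.mul hphi
    simp only [P]
    refine this.congr_deriv ?_
    field_simp
    ring
  · have h : HasDerivAt (fun y : ℝ => -y ^ 3 / s ^ 3 + 3 * y / s ^ 2)
        (-(3 * y ^ 2) / s ^ 3 + 3 / s ^ 2) y := by
      have h1 : HasDerivAt (fun y : ℝ => -y ^ 3 / s ^ 3) (-(3 * y ^ 2) / s ^ 3) y := by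
        simpa using (hasDerivAt_pow 3 y).neg.div_const (s ^ 3)
      have h2 : HasDerivAt (fun y : ℝ => 3 * y / s ^ 2) (3 / s ^ 2) y := by
        simpa using ((hasDerivAt_id y).const_mul (3:ℝ)).div_const (s ^ 2)
      exact h1.add h2
    have := h.mul hphi
    simp only [P]
    refine this.congr_deriv ?_
    field_simp
    ring

lemma hasDerivAt_intX (t : ℝ) (k : ℕ) (hk : k ≤ 3) {y : ℝ} (hy : y ≠ 0) :
    Integrable (fun s => P (k + 1) y s * phi y s * g t s) (volume.restrict (Ioi 0)) ∧
    HasDerivAt (fun z => ∫ s in Ioi (0:ℝ), P k z s * phi z s * g t s)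
      (∫ s in Ioi (0:ℝ), P (k + 1) y s * phi y s * g t s) y := by
  have hay : 0 < |y| := abs_pos.2 hy
  have hy2 : 0 < y ^ 2 := by rw [← sq_abs]; exact pow_pos hay 2
  set M : ℝ := 1 + 2 * |y| with hMdef
  have hM1 : (1:ℝ) ≤ M := by rw [hMdef]; linarith [abs_nonneg y]
  set b : ℝ := y ^ 2 / 8 with hbdef
  have hb : 0 < b := by rw [hbdef]; linarith
  have hball : ∀ z ∈ ball y (|y| / 2), |z| ≤ M ∧ b ≤ z ^ 2 / 2 := by
    intro z hz
    rw [mem_ball, Real.dist_eq] at hz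
    have h0 := abs_sub_abs_le_abs_sub z y
    have h0' := abs_sub_abs_le_abs_sub y z
    rw [abs_sub_comm y z] at h0'
    have h1 : |z| ≤ |y| + |y| / 2 := by linarith
    have h2 : |y| / 2 ≤ |z| := by linarith
    refine ⟨by rw [hMdef]; linarith, ?_⟩
    have h3 : (|y| / 2) ^ 2 ≤ |z| ^ 2 := pow_le_pow_left₀ (by positivity) h2 2
    rw [sq_abs] at h3
    rw [hbdef]
    nlinarith [sq_abs y]
  refine hasDerivAt_integral_of_dominated_loc_of_deriv_le
    (F' := fun z s => P (k + 1) z s * phi z s * g t s)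
    (bound := fun s => 6 * M ^ 4 * bnd b s) (ball_mem_nhds y (half_pos hay))
    (Filter.Eventually.of_forall fun z => (meas_PphiG k z t).aestronglyMeasurable.restrict)
    ?_ ((meas_PphiG (k + 1) y t).aestronglyMeasurable.restrict) ?_
    ((integrable_bnd hb).const_mul _) ?_
  · refine Integrable.mono' ((integrable_bnd hb).const_mul (6 * M ^ 4))
      ((meas_PphiG k y t).aestronglyMeasurable.restrict) ?_
    rw [ae_restrict_iff' measurableSet_Ioi]
    refine ae_of_all _ fun s hs => ?_
    exact bound_x (hk.trans (by norm_num)) hM1 (by rw [hMdef]; linarith [abs_nonneg y]) hs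
      (by rw [hbdef]; linarith)
  · rw [ae_restrict_iff' measurableSet_Ioi]
    refine ae_of_all _ fun s hs z hz => ?_
    obtain ⟨h1, h2⟩ := hball z hz
    exact bound_x (by omega) hM1 h1 hs h2
  · rw [ae_restrict_iff' measurableSet_Ioi]
    refine ae_of_all _ fun s hs z _ => ?_
    exact (hasDerivAt_P_phi k hk hs z).mul_const (g t s)

lemma hasDerivAt_intT1 {x : ℝ} (hx : x ≠ 0) {t : ℝ} (ht : 0 < t) :
    Integrable (fun s => phi x s * gT t s) (volume.restrict (Ioi 0)) ∧
    HasDerivAt (fun τ => ∫ s in Ioi (0:ℝ), phi x s * g τ s)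
      (∫ s in Ioi (0:ℝ), phi x s * gT t s) t := by
  have hax : 0 < |x| := abs_pos.2 hx
  have hx2 : 0 < x ^ 2 := by rw [← sq_abs]; exact pow_pos hax 2
  set M : ℝ := 1 + 2 * |x| with hMdef
  have hM1 : (1:ℝ) ≤ M := by rw [hMdef]; linarith [abs_nonneg x]
  set b : ℝ := x ^ 2 / 8 with hbdef
  have hb : 0 < b := by rw [hbdef]; linarith
  have hb2 : b ≤ x ^ 2 / 2 := by rw [hbdef]; linarith
  refine hasDerivAt_integral_of_dominated_loc_of_deriv_le
    (F' := fun τ s => phi x s * gT τ s)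
    (bound := fun s => 4 / t * bnd b s) (ball_mem_nhds t (half_pos ht))
    (Filter.Eventually.of_forall fun τ =>
      ((meas_phi x).mul (meas_g τ)).aestronglyMeasurable.restrict)
    ?_ (((meas_phi x).mul (meas_gT t)).aestronglyMeasurable.restrict) ?_
    ((integrable_bnd hb).const_mul _) ?_
  · refine Integrable.mono' ((integrable_bnd hb).const_mul (6 * M ^ 4))
      (((meas_phi x).mul (meas_g t)).aestronglyMeasurable.restrict) ?_
    rw [ae_restrict_iff' measurableSet_Ioi]
    refine ae_of_all _ fun s hs => ?_
    simpa [P] using bound_x (k := 0) (by norm_num) hM1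
      (by rw [hMdef]; linarith [abs_nonneg x]) hs hb2
  · rw [ae_restrict_iff' measurableSet_Ioi]
    refine ae_of_all _ fun s hs τ hτ => ?_
    rw [mem_ball, Real.dist_eq] at hτ
    have hτ' : t / 2 ≤ τ := by
      rcases abs_lt.1 hτ with ⟨h1, h2⟩
      linarith
    exact bound_gT hs ht hτ' hb2
  · rw [ae_restrict_iff' measurableSet_Ioi]
    refine ae_of_all _ fun s hs τ _ => ?_
    exact (hasDerivAt_g_t hs τ).const_mul (phi x s)

lemma hasDerivAt_intT2 {x : ℝ} (hx : x ≠ 0) {t : ℝ} (ht : 0 < t) :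
    Integrable (fun s => phi x s * gTT t s) (volume.restrict (Ioi 0)) ∧
    HasDerivAt (fun τ => ∫ s in Ioi (0:ℝ), phi x s * gT τ s)
      (∫ s in Ioi (0:ℝ), phi x s * gTT t s) t := by
  have hax : 0 < |x| := abs_pos.2 hx
  have hx2 : 0 < x ^ 2 := by rw [← sq_abs]; exact pow_pos hax 2
  set b : ℝ := x ^ 2 / 8 with hbdef
  have hb : 0 < b := by rw [hbdef]; linarith
  have hb2 : b ≤ x ^ 2 / 2 := by rw [hbdef]; linarith
  refine hasDerivAt_integral_of_dominated_loc_of_deriv_le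
    (F' := fun τ s => phi x s * gTT τ s)
    (bound := fun s => 24 / t ^ 2 * bnd b s) (ball_mem_nhds t (half_pos ht))
    (Filter.Eventually.of_forall fun τ =>
      ((meas_phi x).mul (meas_gT τ)).aestronglyMeasurable.restrict)
    ((hasDerivAt_intT1 hx ht).1) (((meas_phi x).mul (meas_gTT t)).aestronglyMeasurable.restrict) ?_
    ((integrable_bnd hb).const_mul _) ?_
  · rw [ae_restrict_iff' measurableSet_Ioi]
    refine ae_of_all _ fun s hs τ hτ => ?_
    rw [mem_ball, Real.dist_eq] at hτ
    have hτ' : t / 2 ≤ τ := by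
      rcases abs_lt.1 hτ with ⟨h1, h2⟩
      linarith
    exact bound_gTT hs ht hτ' hb2
  · rw [ae_restrict_iff' measurableSet_Ioi]
    refine ae_of_all _ fun s hs τ _ => ?_
    exact (hasDerivAt_gT_t hs ht (τ := τ)).const_mul (phi x s)

noncomputable def psi (x s : ℝ) : ℝ := x ^ 2 / (2 * s ^ 2) - 1 / (2 * s)

noncomputable def gS (t s : ℝ) : ℝ := (t ^ 2 - s ^ 2) / (Real.pi * (s ^ 2 + t ^ 2) ^ 2)

noncomputable def W (x t s : ℝ) : ℝ := phi x s * psi x s * g t s - phi x s * gS t s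

lemma W_zero (x t : ℝ) : W x t 0 = 0 := by
  simp [W, phi, g]

lemma hasDerivAt_sqrtInv {s : ℝ} (hs : 0 < s) :
    HasDerivAt (fun s : ℝ => (Real.sqrt (2 * Real.pi * s))⁻¹)
      (-(1 / (2 * s)) * (Real.sqrt (2 * Real.pi * s))⁻¹) s := by
  have hpos : 0 < 2 * Real.pi * s := by positivity
  have hl : HasDerivAt (fun s : ℝ => 2 * Real.pi * s) (2 * Real.pi) s := by
    simpa using (hasDerivAt_id s).const_mul (2 * Real.pi)
  have hq : HasDerivAt (fun s : ℝ => Real.sqrt (2 * Real.pi * s))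
      (1 / (2 * Real.sqrt (2 * Real.pi * s)) * (2 * Real.pi)) s :=
    (Real.hasDerivAt_sqrt hpos.ne').comp s hl
  have hqne : Real.sqrt (2 * Real.pi * s) ≠ 0 := by positivity
  have h := hq.inv hqne
  refine h.congr_deriv ?_
  rw [Real.sq_sqrt hpos.le]
  field_simp

lemma hasDerivAt_exp_s {x s : ℝ} (hs : 0 < s) :
    HasDerivAt (fun s : ℝ => Real.exp (-x ^ 2 / (2 * s)))
      (x ^ 2 / (2 * s ^ 2) * Real.exp (-x ^ 2 / (2 * s))) s := by
  have h2s : HasDerivAt (fun s : ℝ => 2 * s) 2 s := by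
    simpa using (hasDerivAt_id s).const_mul (2 : ℝ)
  have h1 : HasDerivAt (fun s : ℝ => -x ^ 2 / (2 * s))
      ((0 * (2 * s) - -x ^ 2 * 2) / (2 * s) ^ 2) s :=
    (hasDerivAt_const s (-x ^ 2)).div h2s (by positivity)
  have h := h1.exp
  convert h using 1
  field_simp
  ring

lemma hasDerivAt_phi_s {x s : ℝ} (hs : 0 < s) :
    HasDerivAt (fun s => phi x s) (phi x s * psi x s) s := by
  have h := (hasDerivAt_sqrtInv hs).mul (hasDerivAt_exp_s (x := x) hs)
  simp only [phi, psi]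
  refine h.congr_deriv ?_
  ring

lemma hasDerivAt_psi_s {x s : ℝ} (hs : 0 < s) :
    HasDerivAt (fun s => psi x s) (-x ^ 2 / s ^ 3 + 1 / (2 * s ^ 2)) s := by
  have hden : HasDerivAt (fun s : ℝ => 2 * s ^ 2) (2 * (2 * s)) s := by
    simpa using ((hasDerivAt_pow 2 s).const_mul (2:ℝ))
  have h1 : HasDerivAt (fun s : ℝ => x ^ 2 / (2 * s ^ 2))
      ((0 * (2 * s ^ 2) - x ^ 2 * (2 * (2 * s))) / (2 * s ^ 2) ^ 2) s :=
    (hasDerivAt_const s (x ^ 2)).div hden (by positivity)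
  have h2s : HasDerivAt (fun s : ℝ => 2 * s) 2 s := by
    simpa using (hasDerivAt_id s).const_mul (2 : ℝ)
  have h2 : HasDerivAt (fun s : ℝ => 1 / (2 * s))
      ((0 * (2 * s) - 1 * 2) / (2 * s) ^ 2) s :=
    (hasDerivAt_const s (1:ℝ)).div h2s (by positivity)
  have h := h1.sub h2
  simp only [psi]
  refine h.congr_deriv ?_
  field_simp
  ring

lemma hasDerivAt_g_s {t s : ℝ} (hs : 0 < s) :
    HasDerivAt (fun s => g t s) (gS t s) s := by
  have hden : HasDerivAt (fun s : ℝ => Real.pi * (s ^ 2 + t ^ 2)) (Real.pi * (2 * s)) s := by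
    simpa using ((hasDerivAt_pow 2 s).add_const (t ^ 2)).const_mul Real.pi
  have h := (hasDerivAt_id s).div hden (by positivity)
  simp only [g, gS]
  refine h.congr_deriv ?_
  simp only [id_eq]
  field_simp
  ring

lemma hasDerivAt_gS_s {t s : ℝ} (hs : 0 < s) :
    HasDerivAt (fun s => gS t s) (-(gTT t s)) s := by
  have hnum : HasDerivAt (fun s : ℝ => t ^ 2 - s ^ 2) (-(2 * s)) s := by
    simpa using (hasDerivAt_pow 2 s).const_sub (t ^ 2)
  have hb : HasDerivAt (fun s : ℝ => s ^ 2 + t ^ 2) (2 * s) s := by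
    simpa using (hasDerivAt_pow 2 s).add_const (t ^ 2)
  have hden : HasDerivAt (fun s : ℝ => Real.pi * (s ^ 2 + t ^ 2) ^ 2)
      (Real.pi * (2 * (s ^ 2 + t ^ 2) * (2 * s))) s := by
    simpa [mul_comm, mul_assoc, mul_left_comm] using (hb.pow 2).const_mul Real.pi
  have h := hnum.div hden (by positivity)
  simp only [gS, gTT]
  refine h.congr_deriv ?_
  field_simp
  ring

lemma hasDerivAt_W {x t s : ℝ} (hs : 0 < s) (ht : 0 < t) :
    HasDerivAt (fun s => W x t s)
      (phi x s * gTT t s + 1 / 4 * (P 4 x s * phi x s * g t s)) s := by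
  have hA := ((hasDerivAt_phi_s (x := x) hs).mul (hasDerivAt_psi_s (x := x) hs)).mul
    (hasDerivAt_g_s (t := t) hs)
  have hB := (hasDerivAt_phi_s (x := x) hs).mul (hasDerivAt_gS_s (t := t) hs)
  have h := hA.sub hB
  simp only [W]
  refine h.congr_deriv ?_
  simp only [Pi.mul_apply]
  have hsne : (s:ℝ) ≠ 0 := hs.ne'
  have hst : Real.pi * (s ^ 2 + t ^ 2) ≠ 0 := by positivity
  simp only [P, phi, psi, g, gS, gTT]
  have hsq : Real.sqrt (2 * Real.pi * s) ≠ 0 := by positivity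
  field_simp
  ring

set_option maxHeartbeats 1000000 in
lemma tendsto_W_atTop (x : ℝ) {t : ℝ} (ht : 0 < t) :
    Tendsto (fun s => W x t s) atTop (𝓝 0) := by
  have hphi0 : Tendsto (fun s => phi x s) atTop (𝓝 0) := by
    apply squeeze_zero_norm' (a := fun s : ℝ => s ^ (-((1:ℝ)/2)))
    · filter_upwards [eventually_gt_atTop (0:ℝ)] with s hs
      rw [Real.norm_eq_abs, abs_of_nonneg (phi_nonneg _ hs)]
      have h := phi_le (b := 0) (y := x) hs (by positivity)
      simp only [neg_zero, zero_div, Real.exp_zero, mul_one] at h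
      refine h.trans (le_of_eq ?_)
      rw [Real.sqrt_eq_rpow]
      nth_rewrite 2 [show (s:ℝ) = s ^ (1:ℝ) by rw [Real.rpow_one]]
      rw [← Real.rpow_sub hs]
      norm_num
    · exact tendsto_rpow_neg_atTop (by norm_num)
  have hpsi0 : Tendsto (fun s => psi x s) atTop (𝓝 0) := by
    have h1 : Tendsto (fun s : ℝ => x ^ 2 / (2 * s ^ 2)) atTop (𝓝 0) :=
      Tendsto.div_atTop tendsto_const_nhds
        (Tendsto.const_mul_atTop two_pos (tendsto_pow_atTop two_ne_zero))
    have h2 : Tendsto (fun s : ℝ => 1 / (2 * s)) atTop (𝓝 0) :=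
      Tendsto.div_atTop tendsto_const_nhds (Tendsto.const_mul_atTop two_pos tendsto_id)
    have := h1.sub h2
    simpa [psi] using this
  have hg0 : Tendsto (fun s => g t s) atTop (𝓝 0) := by
    apply squeeze_zero' (g := fun s : ℝ => s⁻¹)
    · filter_upwards [eventually_gt_atTop (0:ℝ)] with s hs
      exact g_nonneg t hs.le
    · filter_upwards [eventually_gt_atTop (0:ℝ)] with s hs
      exact g_le t hs
    · exact tendsto_inv_atTop_zero
  have hgS0 : Tendsto (fun s => gS t s) atTop (𝓝 0) := by
    apply squeeze_zero_norm' (a := fun s : ℝ => (s ^ 2)⁻¹)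
    · filter_upwards [eventually_gt_atTop (0:ℝ)] with s hs
      have hd : 0 < Real.pi * (s ^ 2 + t ^ 2) ^ 2 := by positivity
      have h2 : (0:ℝ) < s ^ 2 := by positivity
      rw [Real.norm_eq_abs, gS, abs_div, abs_of_pos hd, inv_eq_one_div,
        div_le_div_iff₀ hd h2]
      have h1 : |t ^ 2 - s ^ 2| ≤ s ^ 2 + t ^ 2 := by
        rw [abs_le]; constructor <;> nlinarith [sq_nonneg s, sq_nonneg t]
      have hA := mul_le_mul_of_nonneg_right h1 h2.le
      have hB : (s ^ 2 + t ^ 2) * s ^ 2 ≤ (s ^ 2 + t ^ 2) * (s ^ 2 + t ^ 2) :=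
        mul_le_mul_of_nonneg_left (by nlinarith [sq_nonneg t]) (by positivity)
      have hCc : (s ^ 2 + t ^ 2) * (s ^ 2 + t ^ 2) ≤ Real.pi * (s ^ 2 + t ^ 2) ^ 2 := by
        nlinarith [Real.pi_gt_three, sq_nonneg (s ^ 2 + t ^ 2)]
      nlinarith [hA, hB, hCc]
    · exact (tendsto_pow_atTop two_ne_zero).inv_tendsto_atTop
  have := ((hphi0.mul hpsi0).mul hg0).sub (hphi0.mul hgS0)
  simpa [W] using this

set_option maxHeartbeats 1000000 in
lemma tendsto_W_zero {x t : ℝ} (hx : x ≠ 0) (ht : 0 < t) :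
    Tendsto (fun s => W x t s) (𝓝[>] (0:ℝ)) (𝓝 0) := by
  have hax : 0 < |x| := abs_pos.2 hx
  have hx2 : 0 < x ^ 2 := by rw [← sq_abs]; exact pow_pos hax 2
  have ht2 : (0:ℝ) < t ^ 2 := by positivity
  set c : ℝ := x ^ 2 / 2 with hcdef
  have hc : 0 < c := by rw [hcdef]; linarith
  set C : ℝ := (x ^ 2 + 3) / t ^ 2 with hCdef
  have hC : 0 < C := by rw [hCdef]; positivity
  have hZ : Tendsto (fun s : ℝ => C * ((s⁻¹) ^ 3 * Real.exp (-(c * s⁻¹))))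
      (𝓝[>] (0:ℝ)) (𝓝 0) := by
    have h1 : Tendsto (fun u : ℝ => (c * u) ^ 3 * Real.exp (-(c * u))) atTop (𝓝 0) :=
      (tendsto_pow_mul_exp_neg_atTop_nhds_zero 3).comp
        (Tendsto.const_mul_atTop hc tendsto_id)
    have h2 : Tendsto (fun u : ℝ => u ^ 3 * Real.exp (-(c * u))) atTop (𝓝 0) := by
      have h3 := h1.const_mul ((c ^ 3)⁻¹)
      rw [mul_zero] at h3
      apply h3.congr
      intro u
      field_simp
    have h4 := (h2.comp tendsto_inv_nhdsGT_zero).const_mul C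
    rw [mul_zero] at h4
    exact h4
  apply squeeze_zero_norm' ?_ hZ
  filter_upwards [Ioo_mem_nhdsGT (zero_lt_one (α := ℝ))] with s hs
  obtain ⟨hs0, hs1⟩ := hs
  have hu0 : (0:ℝ) < s⁻¹ := inv_pos.2 hs0
  have hu1 : (1:ℝ) ≤ s⁻¹ := (one_le_inv_iff₀).2 ⟨hs0, hs1.le⟩
  have hexp0 : (0:ℝ) ≤ Real.exp (-c / s) := (Real.exp_pos _).le
  -- individual bounds
  have key1 : phi x s ≤ Real.exp (-c / s) * s⁻¹ := by
    have h := phi_le (b := c) (y := x) hs0 (le_of_eq hcdef)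
    have hsq : Real.sqrt s ≤ 1 := Real.sqrt_le_one.2 hs1.le
    calc phi x s ≤ Real.sqrt s * Real.exp (-c / s) / s := h
      _ ≤ 1 * Real.exp (-c / s) / s := by
          exact (div_le_div_iff_of_pos_right hs0).2 (mul_le_mul_of_nonneg_right hsq hexp0)
      _ = Real.exp (-c / s) * s⁻¹ := by field_simp
  have key2 : |psi x s| ≤ (x ^ 2 + 1) / 2 * s⁻¹ ^ 2 := by
    have e : psi x s = x ^ 2 / 2 * s⁻¹ ^ 2 - 1 / 2 * s⁻¹ := by
      simp only [psi]; field_simp; try ring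
    have huu : s⁻¹ ≤ s⁻¹ ^ 2 := by nlinarith
    rw [e, abs_le]
    constructor <;> nlinarith [sq_nonneg s⁻¹, mul_nonneg hx2.le (sq_nonneg s⁻¹)]
  have key3 : g t s ≤ s / t ^ 2 := by
    simp only [g]
    exact div_le_div_of_nonneg_left hs0.le ht2 (by nlinarith [Real.pi_gt_three, sq_nonneg s])
  have key4 : |gS t s| ≤ 1 / t ^ 2 := by
    have hd : 0 < Real.pi * (s ^ 2 + t ^ 2) ^ 2 := by positivity
    simp only [gS]
    rw [abs_div, abs_of_pos hd, div_le_div_iff₀ hd ht2]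
    have h1 : |t ^ 2 - s ^ 2| ≤ s ^ 2 + t ^ 2 := by
      rw [abs_le]; constructor <;> nlinarith [sq_nonneg s, sq_nonneg t]
    have hA := mul_le_mul_of_nonneg_right h1 ht2.le
    have hB : (s ^ 2 + t ^ 2) * t ^ 2 ≤ (s ^ 2 + t ^ 2) * (s ^ 2 + t ^ 2) :=
      mul_le_mul_of_nonneg_left (by nlinarith [sq_nonneg s]) (by positivity)
    have hCc : (s ^ 2 + t ^ 2) * (s ^ 2 + t ^ 2) ≤ Real.pi * (s ^ 2 + t ^ 2) ^ 2 := by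
      nlinarith [Real.pi_gt_three, sq_nonneg (s ^ 2 + t ^ 2)]
    nlinarith [hA, hB, hCc]
  have htri : ∀ a b : ℝ, |a - b| ≤ |a| + |b| := fun a b => by
    rw [sub_eq_add_neg]
    exact (abs_add_le _ _).trans (by rw [abs_neg])
  have hT1 : phi x s * |psi x s| * g t s ≤ (x ^ 2 + 1) / 2 * s⁻¹ ^ 2 * Real.exp (-c / s) / t ^ 2 := by
    calc phi x s * |psi x s| * g t s
        ≤ (Real.exp (-c / s) * s⁻¹) * ((x ^ 2 + 1) / 2 * s⁻¹ ^ 2) * (s / t ^ 2) := by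
          apply mul_le_mul (mul_le_mul key1 key2 (abs_nonneg _) (by positivity)) key3
            (g_nonneg t hs0.le) (by positivity)
      _ = (x ^ 2 + 1) / 2 * s⁻¹ ^ 2 * Real.exp (-c / s) / t ^ 2 * (s⁻¹ * s) := by ring
      _ = (x ^ 2 + 1) / 2 * s⁻¹ ^ 2 * Real.exp (-c / s) / t ^ 2 := by
          rw [inv_mul_cancel₀ hs0.ne', mul_one]
  have hT2 : phi x s * |gS t s| ≤ s⁻¹ * Real.exp (-c / s) / t ^ 2 := by
    calc phi x s * |gS t s| ≤ (Real.exp (-c / s) * s⁻¹) * (1 / t ^ 2) := by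
          apply mul_le_mul key1 key4 (abs_nonneg _) (by positivity)
      _ = s⁻¹ * Real.exp (-c / s) / t ^ 2 := by ring
  have hWb : ‖W x t s‖ ≤ ((x ^ 2 + 1) / 2 * s⁻¹ ^ 2 + s⁻¹) * Real.exp (-c / s) / t ^ 2 := by
    rw [Real.norm_eq_abs]
    simp only [W]
    refine (htri _ _).trans ?_
    have e1 : |phi x s * psi x s * g t s| = phi x s * |psi x s| * g t s := by
      rw [abs_mul, abs_mul, abs_of_nonneg (phi_nonneg x hs0), abs_of_nonneg (g_nonneg t hs0.le)]
    have e2 : |phi x s * gS t s| = phi x s * |gS t s| := by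
      rw [abs_mul, abs_of_nonneg (phi_nonneg x hs0)]
    rw [e1, e2]
    calc phi x s * |psi x s| * g t s + phi x s * |gS t s|
        ≤ (x ^ 2 + 1) / 2 * s⁻¹ ^ 2 * Real.exp (-c / s) / t ^ 2
          + s⁻¹ * Real.exp (-c / s) / t ^ 2 := add_le_add hT1 hT2
      _ = ((x ^ 2 + 1) / 2 * s⁻¹ ^ 2 + s⁻¹) * Real.exp (-c / s) / t ^ 2 := by ring
  refine hWb.trans ?_
  have hpoly : (x ^ 2 + 1) / 2 * s⁻¹ ^ 2 + s⁻¹ ≤ (x ^ 2 + 3) * s⁻¹ ^ 3 := by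
    have huu2 : s⁻¹ ^ 2 ≤ s⁻¹ ^ 3 := by nlinarith
    have huu3 : s⁻¹ ≤ s⁻¹ ^ 3 := by nlinarith
    nlinarith [mul_nonneg (by positivity : (0:ℝ) ≤ (x ^ 2 + 1) / 2)
      (sub_nonneg.2 huu2)]
  have he : -(c * s⁻¹) = -c / s := by
    rw [neg_div, div_eq_mul_inv]
  rw [he]
  calc ((x ^ 2 + 1) / 2 * s⁻¹ ^ 2 + s⁻¹) * Real.exp (-c / s) / t ^ 2
      ≤ (x ^ 2 + 3) * s⁻¹ ^ 3 * Real.exp (-c / s) / t ^ 2 := by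
        exact (div_le_div_iff_of_pos_right ht2).2 (mul_le_mul_of_nonneg_right hpoly hexp0)
    _ = C * (s⁻¹ ^ 3 * Real.exp (-c / s)) := by
        rw [hCdef]; ring

set_option maxHeartbeats 1000000 in
lemma key_integral {x t : ℝ} (hx : x ≠ 0) (ht : 0 < t) :
    ∫ s in Ioi (0:ℝ), (phi x s * gTT t s + 1 / 4 * (P 4 x s * phi x s * g t s)) = 0 := by
  have hcont : ContinuousWithinAt (fun s => W x t s) (Ici (0:ℝ)) 0 := by
    rw [← Set.Ioi_insert]
    rw [continuousWithinAt_insert_self]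
    unfold ContinuousWithinAt
    rw [show (fun s => W x t s) 0 = 0 from W_zero x t]
    exact tendsto_W_zero hx ht
  have hderiv : ∀ s ∈ Ioi (0:ℝ), HasDerivAt (fun s => W x t s)
      (phi x s * gTT t s + 1 / 4 * (P 4 x s * phi x s * g t s)) s :=
    fun s hs => hasDerivAt_W hs ht
  have hint : IntegrableOn
      (fun s => phi x s * gTT t s + 1 / 4 * (P 4 x s * phi x s * g t s)) (Ioi (0:ℝ)) :=
    (hasDerivAt_intT2 hx ht).1.add (((hasDerivAt_intX t 3 le_rfl hx).1).const_mul (1 / 4))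
  have h := integral_Ioi_of_hasDerivAt_of_tendsto hcont hderiv hint (tendsto_W_atTop x ht)
  rw [W_zero] at h
  simpa using h

end DensBCAux

section FinalProof

open DensBCAux

set_option maxHeartbeats 1000000 in
/-- For `x ≠ 0` and `t > 0`, the density of `B(|C(t)|)` satisfies the fourth-order
equation `∂²p/∂t² = −(1/4) ∂⁴p/∂x⁴`. -/
theorem densBC_fourth_order_pde (x t : ℝ) (hx : x ≠ 0) (ht : 0 < t) :
    deriv (deriv (fun τ => densBC x τ)) t
      = -(1 / 4) * iteratedDeriv 4 (fun y => densBC y t) x := by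
  -- t-side
  have hfun : (fun τ => densBC x τ) = fun τ => 2 * ∫ s in Ioi (0:ℝ), phi x s * g τ s := by
    funext τ; simp only [densBC, phi, g]
  have hT1 : ∀ τ : ℝ, 0 < τ → HasDerivAt (fun τ => densBC x τ)
      (2 * ∫ s in Ioi (0:ℝ), phi x s * gT τ s) τ := by
    intro τ hτ
    rw [hfun]
    exact ((hasDerivAt_intT1 hx hτ).2).const_mul 2
  have heq1 : deriv (fun τ => densBC x τ) =ᶠ[𝓝 t]
      fun τ => 2 * ∫ s in Ioi (0:ℝ), phi x s * gT τ s :=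
    eventually_of_mem (Ioi_mem_nhds ht) fun τ hτ => (hT1 τ hτ).deriv
  have hL : deriv (deriv (fun τ => densBC x τ)) t
      = 2 * ∫ s in Ioi (0:ℝ), phi x s * gTT t s := by
    rw [heq1.deriv_eq]
    exact (((hasDerivAt_intT2 hx ht).2).const_mul 2).deriv
  -- x-side
  have hU : IsOpen {y : ℝ | y ≠ 0} := isOpen_ne
  have hX : ∀ k : ℕ, k ≤ 3 → ∀ y : ℝ, y ≠ 0 →
      HasDerivAt (fun z => 2 * ∫ s in Ioi (0:ℝ), P k z s * phi z s * g t s)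
        (2 * ∫ s in Ioi (0:ℝ), P (k + 1) y s * phi y s * g t s) y :=
    fun k hk y hy => ((hasDerivAt_intX t k hk hy).2).const_mul 2
  have hd0 : (fun y => densBC y t)
      = fun y => 2 * ∫ s in Ioi (0:ℝ), P 0 y s * phi y s * g t s := by
    funext y; simp only [densBC, phi, g, P, one_mul]
  have h1 : ∀ y : ℝ, y ≠ 0 → deriv (fun y => densBC y t) y
      = 2 * ∫ s in Ioi (0:ℝ), P 1 y s * phi y s * g t s := by
    intro y hy; rw [hd0]; exact (hX 0 (by norm_num) y hy).deriv
  have h2 : ∀ y : ℝ, y ≠ 0 → deriv (deriv (fun y => densBC y t)) y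
      = 2 * ∫ s in Ioi (0:ℝ), P 2 y s * phi y s * g t s := by
    intro y hy
    have he : deriv (fun y => densBC y t) =ᶠ[𝓝 y]
        fun z => 2 * ∫ s in Ioi (0:ℝ), P 1 z s * phi z s * g t s :=
      eventually_of_mem (hU.mem_nhds hy) fun z hz => h1 z hz
    rw [he.deriv_eq]
    exact (hX 1 (by norm_num) y hy).deriv
  have h3 : ∀ y : ℝ, y ≠ 0 → deriv (deriv (deriv (fun y => densBC y t))) y
      = 2 * ∫ s in Ioi (0:ℝ), P 3 y s * phi y s * g t s := by
    intro y hy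
    have he : deriv (deriv (fun y => densBC y t)) =ᶠ[𝓝 y]
        fun z => 2 * ∫ s in Ioi (0:ℝ), P 2 z s * phi z s * g t s :=
      eventually_of_mem (hU.mem_nhds hy) fun z hz => h2 z hz
    rw [he.deriv_eq]
    exact (hX 2 (by norm_num) y hy).deriv
  have h4 : ∀ y : ℝ, y ≠ 0 → deriv (deriv (deriv (deriv (fun y => densBC y t)))) y
      = 2 * ∫ s in Ioi (0:ℝ), P 4 y s * phi y s * g t s := by
    intro y hy
    have he : deriv (deriv (deriv (fun y => densBC y t))) =ᶠ[𝓝 y]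
        fun z => 2 * ∫ s in Ioi (0:ℝ), P 3 z s * phi z s * g t s :=
      eventually_of_mem (hU.mem_nhds hy) fun z hz => h3 z hz
    rw [he.deriv_eq]
    exact (hX 3 le_rfl y hy).deriv
  have hR : iteratedDeriv 4 (fun y => densBC y t) x
      = 2 * ∫ s in Ioi (0:ℝ), P 4 x s * phi x s * g t s := by
    rw [show (4:ℕ) = 3 + 1 from rfl, iteratedDeriv_succ,
      show (3:ℕ) = 2 + 1 from rfl, iteratedDeriv_succ,
      show (2:ℕ) = 1 + 1 from rfl, iteratedDeriv_succ, iteratedDeriv_one]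
    exact h4 x hx
  rw [hL, hR]
  have hk := key_integral hx ht
  have hI1 : Integrable (fun s => phi x s * gTT t s) (volume.restrict (Ioi 0)) :=
    (hasDerivAt_intT2 hx ht).1
  have hI2 : Integrable (fun s => P 4 x s * phi x s * g t s) (volume.restrict (Ioi 0)) :=
    (hasDerivAt_intX t 3 le_rfl hx).1
  rw [integral_add hI1 (hI2.const_mul (1 / 4)), integral_const_mul] at hk
  linarith [hk]

end FinalProof
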